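/- Let G be a finite group. The category of sheaves of sets on the orbit category O(G) equipped with the atomic topology is equivalent to the category G-Set of right G-sets. Explicitly, the functor sending a right G-set M to the presheaf H\G ↦ Hom_{G-Set}(H\G, M) is an equivalence onto the sheaf category, with quasi-inverse sending a sheaf F to the G-set F(1\G). -/

import Mathlib

open CategoryTheory

/-! ## Basic site-theoretic notions -/

/-- The Ore condition: any cospan can be completed to a commutative square. -/
def OreCondition (C : Type*) [Category C] : Prop :=
  ∀ ⦃x y z : C⦄ (f : y ⟶ x) (g : z ⟶ x),
    ∃ (w : C) (p : w ⟶ y) (q : w ⟶ z), p ≫ f = q ≫ g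

/-- A Grothendieck topology is the atomic topology iff its covering sieves are
exactly the nonempty sieves. -/
def IsAtomicTopology {C : Type*} [Category C] (J : GrothendieckTopology C) : Prop :=
  ∀ (x : C) (S : Sieve x), S ∈ J x ↔ ∃ (y : C) (f : y ⟶ x), S f

/-- The presieve on `c` consisting of all morphisms with domain `c₀`. -/
def domPresieve {C : Type*} [Category C] (c₀ : C) (c : C) : Presieve c :=
  fun Y => {_f | Y = c₀}

/-! ## Right `G`-sets and the orbit category -/

/-- The category of right `G`-sets, realized as presheaves of sets on the
one-object category of `G`. -/
abbrev GSet (G : Type) [Group G] := (SingleObj G)ᵒᵖ ⥤ Type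

variable {G : Type} [Group G]

/-- The right coset space `H\G` as a right `G`-set (`G` acting by right
multiplication). -/
def cosetGSet (H : Subgroup G) : GSet G where
  obj _ := Quotient (QuotientGroup.rightRel H)
  map f := TypeCat.ofHom (Quotient.map' (fun x => x * f.unop)
    (fun a b hab => by
      rw [QuotientGroup.rightRel_apply] at hab ⊢
      simpa only [mul_inv_rev, mul_assoc, mul_inv_cancel_left] using hab))
  map_id _ := by
    apply TypeCat.homEquiv.injective
    funext q
    refine Quotient.inductionOn' q fun a => ?_
    exact congrArg (Quotient.mk _) (mul_one a)
  map_comp f g := by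
    apply TypeCat.homEquiv.injective
    funext q
    refine Quotient.inductionOn' q fun a => ?_
    exact congrArg (Quotient.mk _) (mul_assoc a f.unop g.unop).symm

/-- The orbit category `O(G)`: the full subcategory of right `G`-sets on the
coset spaces `H\G`, indexed by the subgroups of `G`. -/
abbrev OrbitCat (G : Type) [Group G] := InducedCategory (GSet G) (cosetGSet (G := G))

/-- For `a ∈ G`, the `G`-map `c_a : 1\G → 1\G`, `k ↦ a * k`. -/
def botAuto (a : G) : cosetGSet (⊥ : Subgroup G) ⟶ cosetGSet (⊥ : Subgroup G) where
  app _ := TypeCat.ofHom (Quotient.map' (fun k => a * k)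
    (fun x y hxy => by
      rw [QuotientGroup.rightRel_apply] at hxy ⊢
      rw [Subgroup.mem_bot] at hxy ⊢
      rw [mul_inv_rev, ← mul_assoc, mul_assoc a, hxy]
      simp))
  naturality X Y f := by
    apply TypeCat.homEquiv.injective
    funext q
    refine Quotient.inductionOn' q fun k => ?_
    exact congrArg (Quotient.mk _) (mul_assoc a k f.unop).symm

/-- The functor from the one-object category of `G` to the orbit category with
value `1\G`, sending `a` to `c_a`; it makes `F(1\G)` a right `G`-set for any
presheaf `F` on the orbit category. -/
def orbitBotIota (G : Type) [Group G] : SingleObj G ⥤ OrbitCat G where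
  obj _ := (⊥ : Subgroup G)
  map a := InducedCategory.homMk (botAuto a)
  map_id _ := by
    ext X q
    refine Quotient.inductionOn' q fun k => ?_
    exact congrArg (Quotient.mk _) (one_mul k)
  map_comp {x y z} a b := by
    ext X q
    refine Quotient.inductionOn' q fun k => ?_
    exact congrArg (Quotient.mk _) (mul_assoc b a k)

/-! ## The transporter category of a `G`-poset -/

/-- The transporter category `P ⋊ G` of a `G`-poset `P`: objects are those of
`P`, and morphisms `x ⟶ y` are elements `g ∈ G` with `g • x ≤ y`. -/
@[ext] structure Transporter (G : Type) (P : Type) where pt : P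

instance Transporter.category (G P : Type) [Group G] [PartialOrder P] [MulAction G P]
    [CovariantClass G P (· • ·) (· ≤ ·)] : Category (Transporter G P) where
  Hom x y := { g : G // g • x.pt ≤ y.pt }
  id x := ⟨1, by simp⟩
  comp {x y z} f g := ⟨g.1 * f.1, by
    rw [mul_smul]
    exact le_trans (CovariantClass.elim g.1 f.2) g.2⟩
  id_comp f := Subtype.ext (mul_one _)
  comp_id f := Subtype.ext (one_mul _)
  assoc f g h := Subtype.ext (mul_assoc h.1 g.1 f.1).symm

variable {P : Type} [PartialOrder P] [MulAction G P]
    [CovariantClass G P (· • ·) (· ≤ ·)]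

theorem smul_le_smul_act (g : G) {a b : P} (h : a ≤ b) : g • a ≤ g • b :=
  CovariantClass.elim g h

/-- An initial (i.e. bottom) element of a `G`-poset is fixed by `G`. -/
theorem smul_bot_eq {x₀ : P} (hbot : ∀ x : P, x₀ ≤ x) (g : G) : g • x₀ = x₀ :=
  le_antisymm (by simpa using smul_le_smul_act g (hbot (g⁻¹ • x₀))) (hbot _)

/-- The endomorphism `(g, id)` of the initial object `x₀` of `P ⋊ G`. -/
def gmor {x₀ : P} (hbot : ∀ x : P, x₀ ≤ x) (g : G) :
    (⟨x₀⟩ : Transporter G P) ⟶ (⟨x₀⟩ : Transporter G P) :=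
  ⟨g, le_of_eq (smul_bot_eq hbot g)⟩

theorem gmor_comp {x₀ : P} (hbot : ∀ x : P, x₀ ≤ x) (a b : G) :
    gmor (G := G) hbot b ≫ gmor hbot a = gmor hbot (a * b) := rfl

theorem gmor_one {x₀ : P} (hbot : ∀ x : P, x₀ ≤ x) :
    gmor (G := G) hbot (1 : G) = 𝟙 (⟨x₀⟩ : Transporter G P) := rfl

/-- The projection functor `π : P ⋊ G ⥤ G`. -/
def piFunctor (G P : Type) [Group G] [PartialOrder P] [MulAction G P]
    [CovariantClass G P (· • ·) (· ≤ ·)] : Transporter G P ⥤ SingleObj G where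
  obj _ := SingleObj.star G
  map f := f.1
  map_id _ := rfl
  map_comp _ _ := rfl

/-! ## Quotients of transporter categories and fixed-point presheaves -/

variable {C : Type} [SmallCategory C]

section
variable (ρ : Transporter G P ⥤ C) {x₀ : P} (hbot : ∀ x : P, x₀ ≤ x)

/-- `Hom_C(x₀, c)` as a right `G`-set, with `f · g := ρ(g, id) ≫ f`. -/
def homGSet (c : C) : GSet G where
  obj _ := (ρ.obj ⟨x₀⟩ ⟶ c)
  map f := TypeCat.ofHom fun φ => ρ.map (gmor hbot f.unop) ≫ φ
  map_id _ := by
    apply TypeCat.homEquiv.injective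
    funext φ
    show ρ.map (gmor hbot (1 : G)) ≫ φ = φ
    rw [gmor_one, ρ.map_id, Category.id_comp]
  map_comp {X Y Z} f g := by
    apply TypeCat.homEquiv.injective
    funext φ
    show ρ.map (gmor hbot (f.unop * g.unop)) ≫ φ =
      ρ.map (gmor hbot g.unop) ≫ ρ.map (gmor hbot f.unop) ≫ φ
    rw [← gmor_comp, ρ.map_comp, Category.assoc]

/-- Postcomposition `Hom_C(x₀, c) → Hom_C(x₀, c')` with `φ : c ⟶ c'`, as a map
of right `G`-sets. -/
def homGSetMap {c c' : C} (φ : c ⟶ c') : homGSet ρ hbot c ⟶ homGSet ρ hbot c' where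
  app _ := TypeCat.ofHom fun f => (show ρ.obj ⟨x₀⟩ ⟶ c from f) ≫ φ
  naturality X Y f := by
    apply TypeCat.homEquiv.injective
    funext ψ
    show (ρ.map (gmor hbot f.unop) ≫ (show ρ.obj ⟨x₀⟩ ⟶ c from ψ)) ≫ φ =
      ρ.map (gmor hbot f.unop) ≫ ((show ρ.obj ⟨x₀⟩ ⟶ c from ψ) ≫ φ)
    exact Category.assoc _ _ _

theorem homGSetMap_id (c : C) : homGSetMap ρ hbot (𝟙 c) = 𝟙 (homGSet ρ hbot c) := by
  ext X f
  exact Category.comp_id f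

theorem homGSetMap_comp {c c' c'' : C} (φ : c ⟶ c') (ψ : c' ⟶ c'') :
    homGSetMap ρ hbot (φ ≫ ψ) = homGSetMap ρ hbot φ ≫ homGSetMap ρ hbot ψ := by
  ext X f
  exact (Category.assoc _ _ _).symm

/-- The fixed-point presheaf `F_M : x ↦ Hom_{G-Set}(Hom_C(x₀, x), M)` on `C`. -/
def fixedPointPresheaf (M : GSet G) : Cᵒᵖ ⥤ Type where
  obj c := homGSet ρ hbot c.unop ⟶ M
  map {c c'} ψ := TypeCat.ofHom fun η => homGSetMap ρ hbot ψ.unop ≫ η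
  map_id c := by
    apply TypeCat.homEquiv.injective
    funext η
    show homGSetMap ρ hbot (𝟙 c.unop) ≫ η = η
    rw [homGSetMap_id, Category.id_comp]
  map_comp {c c' c''} ψ ψ' := by
    apply TypeCat.homEquiv.injective
    funext η
    show homGSetMap ρ hbot (ψ'.unop ≫ ψ.unop) ≫ η = _
    rw [homGSetMap_comp, Category.assoc]
    rfl

/-- The right `G`-set `𝔊(x₀)` attached to a presheaf `𝔊` on `C`: `g ∈ G`
acts as `𝔊(ρ(g, id))`. -/
def evalGSet (𝔊 : Cᵒᵖ ⥤ Type) : GSet G where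
  obj _ := 𝔊.obj (Opposite.op (ρ.obj ⟨x₀⟩))
  map f := 𝔊.map (ρ.map (gmor hbot f.unop)).op
  map_id _ := by
    show 𝔊.map (ρ.map (gmor hbot (1 : G))).op = _
    rw [gmor_one, ρ.map_id]
    exact 𝔊.map_id _
  map_comp {X Y Z} f g := by
    show 𝔊.map (ρ.map (gmor hbot (f.unop * g.unop))).op = _
    rw [← gmor_comp, ρ.map_comp, op_comp, 𝔊.map_comp]

end

/-- `ρ : P⋊G ⥤ C` is a category extension: it is bijective on objects,
surjective on morphism sets, the kernel groups `K(y)` act freely by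
postcomposition on hom sets, and `ρ` exactly identifies the `K(y)`-orbits of
morphisms, i.e. `K(y)\Hom(x, y) ≅ Hom_C(ρx, ρy)`. -/
structure IsCatExtension (ρ : Transporter G P ⥤ C) : Prop where
  bij_obj : Function.Bijective ρ.obj
  surj_map : ∀ {x y : Transporter G P} (f : ρ.obj x ⟶ ρ.obj y), ∃ u : x ⟶ y, ρ.map u = f
  free : ∀ {y : Transporter G P} (α : y ⟶ y), ρ.map α = 𝟙 (ρ.obj y) →
    ∀ {x : Transporter G P} (u : x ⟶ y), u ≫ α = u → α = 𝟙 y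
  fiber : ∀ {x y : Transporter G P} (u u' : x ⟶ y),
    ρ.map u = ρ.map u' ↔ ∃ α : y ⟶ y, ρ.map α = 𝟙 (ρ.obj y) ∧ u ≫ α = u'

/-! ## The transporter category `T(G)` on subgroups -/

/-- The transporter category `T(G)`: objects are the subgroups of `G`,
morphisms `H ⟶ K` are elements `g ∈ G` with `gHg⁻¹ ≤ K`. -/
@[ext] structure TransporterCat (G : Type) [Group G] where sub : Subgroup G

instance TransporterCat.category (G : Type) [Group G] : Category (TransporterCat G) where
  Hom H K := { g : G // ∀ h ∈ H.sub, g * h * g⁻¹ ∈ K.sub }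
  id H := ⟨1, fun h hh => by simpa using hh⟩
  comp {H K L} f g := ⟨g.1 * f.1, fun h hh => by
    have hmem := g.2 _ (f.2 h hh)
    have heq : g.1 * (f.1 * h * f.1⁻¹) * g.1⁻¹ = (g.1 * f.1) * h * (g.1 * f.1)⁻¹ := by group
    rwa [heq] at hmem⟩
  id_comp f := Subtype.ext (mul_one _)
  comp_id f := Subtype.ext (one_mul _)
  assoc f g h := Subtype.ext (mul_assoc h.1 g.1 f.1).symm

/-- The conjugate subgroup `gHg⁻¹`. -/
def conjSubgroup (g : G) (H : Subgroup G) : Subgroup G :=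
  H.map (MulAut.conj g).toMonoidHom

lemma conjSubgroup_inv_mem {g : G} {H : Subgroup G} {w : G}
    (hw : w ∈ conjSubgroup g H) : g⁻¹ * w * g⁻¹⁻¹ ∈ H := by
  obtain ⟨h, hh, rfl⟩ := hw
  have : g⁻¹ * ((MulAut.conj g).toMonoidHom h) * g⁻¹⁻¹ = h := by
    simp [MulAut.conj_apply]; group
  rwa [this]

/-- The `G`-map `H\G → K\G`, `Hk ↦ Kgk`, attached to `g ∈ G` with `gHg⁻¹ ≤ K`. -/
def transToOrbit {H K : Subgroup G} (g : { g : G // ∀ h ∈ H, g * h * g⁻¹ ∈ K }) :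
    cosetGSet H ⟶ cosetGSet K where
  app _ := TypeCat.ofHom (Quotient.map' (fun k => g.1 * k)
    (fun a b hab => by
      rw [QuotientGroup.rightRel_apply] at hab ⊢
      have := g.2 _ hab
      have heq : g.1 * (b * a⁻¹) * g.1⁻¹ = (g.1 * b) * (g.1 * a)⁻¹ := by group
      rwa [heq] at this))
  naturality X Y f := by
    apply TypeCat.homEquiv.injective
    funext q
    refine Quotient.inductionOn' q fun k => ?_
    exact congrArg (Quotient.mk _) (mul_assoc g.1 k f.unop).symm

/-- The setoid on `{g : G // gHg⁻¹ ≤ K}` whose classes are right cosets `Kg`. -/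
def transSetoid (H K : Subgroup G) : Setoid { g : G // ∀ h ∈ H, g * h * g⁻¹ ∈ K } where
  r a b := a.1 * b.1⁻¹ ∈ K
  iseqv := by
    constructor
    · intro a; simpa using K.one_mem
    · intro a b h
      simpa using K.inv_mem h
    · intro a b c h1 h2
      have := K.mul_mem h1 h2
      simpa [mul_assoc] using this

/-! ## The coset space `H\G` as a discrete `G`-poset -/

/-- The coset space `H\G` as a discretely ordered `G`-poset, with `g` acting
by `Hk ↦ Hkg⁻¹`. -/
def CosetPoset (G : Type) [Group G] (H : Subgroup G) :=
  Quotient (QuotientGroup.rightRel H)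

instance (H : Subgroup G) : PartialOrder (CosetPoset G H) where
  le x y := x = y
  le_refl _ := rfl
  le_trans _ _ _ h h' := Eq.trans h h'
  le_antisymm _ _ h _ := h

instance (H : Subgroup G) : MulAction G (CosetPoset G H) where
  smul g := Quotient.map' (fun k => k * g⁻¹)
    (fun a b hab => by
      rw [QuotientGroup.rightRel_apply] at hab ⊢
      simpa [mul_assoc] using hab)
  one_smul q := by
    refine Quotient.inductionOn' q fun k => ?_
    exact congrArg (Quotient.mk _) (by simp)
  mul_smul a b q := by
    refine Quotient.inductionOn' q fun k => ?_
    exact congrArg (Quotient.mk _) (by simp [mul_assoc])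

instance (H : Subgroup G) : CovariantClass G (CosetPoset G H) (· • ·) (· ≤ ·) where
  elim g x y h := le_of_eq (congrArg (g • ·) (le_antisymm h (Eq.symm h : y ≤ x)))

/-! ## Underlying `G`-set of a right `RG`-module -/

/-- The underlying right `G`-set of a right `RG`-module. -/
noncomputable def UGSet (R : Type) [CommRing R]
    (M : ModuleCat (MonoidAlgebra R G)ᵐᵒᵖ) : GSet G where
  obj _ := M
  map f := TypeCat.ofHom fun m => (MulOpposite.op (MonoidAlgebra.single f.unop (1 : R))) • m
  map_id _ := by
    apply TypeCat.homEquiv.injective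
    funext m
    show (MulOpposite.op (MonoidAlgebra.single (1 : G) (1 : R))) • m = m
    rw [← MonoidAlgebra.one_def, MulOpposite.op_one, one_smul]
  map_comp {X Y Z} f g := by
    apply TypeCat.homEquiv.injective
    funext m
    show (MulOpposite.op (MonoidAlgebra.single (f.unop * g.unop) (1 : R))) • m =
      (MulOpposite.op (MonoidAlgebra.single g.unop (1 : R))) •
        ((MulOpposite.op (MonoidAlgebra.single f.unop (1 : R))) • m)
    rw [smul_smul, ← MulOpposite.op_mul, MonoidAlgebra.single_mul_single, one_mul]


/-! The functor `ι = orbitBotIota : G ⥤ O(G)`, `* ↦ 1\G`, is fully faithful because `1\G` is the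
representable `G`-set, and it is cover-dense for the atomic topology because every `H\G` receives
a map from `1\G`. As `G` is a groupoid, a sieve on `*` with nonempty image is maximal, so the
topology induced on `G` is the trivial one, and the comparison lemma identifies sheaves on `O(G)`
with presheaves on `G`, i.e. with `G`-sets, by restriction `F ↦ F(1\G)`. The quasi-inverse is read
off from Yoneda: for a sheaf `F`, `F(H\G) = Hom(y(H\G), F) = Hom(ι^* y(H\G), ι^* F) =
Hom_G(H\G, F(1\G))`, the middle step because restriction along a cover-dense functor is fully
faithful on sheaves. -/

universe u

open Opposite

namespace CategoryTheory.Functor.IsCoverDense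

variable {C D : Type u} [SmallCategory C] [SmallCategory D] (F : C ⥤ D)
  {K : GrothendieckTopology D} [F.IsCoverDense K] [F.IsLocallyFull K]

instance isIso_whiskerLeft_yonedaMap_whiskeringLeft (Q : Sheaf K (Type u)) :
    IsIso (whiskerLeft yoneda.op
      (yonedaMap ((whiskeringLeft Cᵒᵖ Dᵒᵖ (Type u)).obj F.op) Q.obj)) := by
  rw [NatTrans.isIso_iff_isIso_app]
  exact fun U => (isIso_iff_bijective _).2
    (whiskerLeft_obj_map_bijective_of_isCoverDense K F _ Q.obj Q.property)

noncomputable def sheafIsoHomRestrictedYoneda (Q : Sheaf K (Type u)) :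
    Q.obj ≅ (yoneda ⋙ (whiskeringLeft Cᵒᵖ Dᵒᵖ (Type u)).obj F.op).op ⋙
      yoneda.obj (F.op ⋙ Q.obj) :=
  (curriedYonedaLemma'.app Q.obj).symm ≪≫
    asIso (whiskerLeft yoneda.op
      (yonedaMap ((whiskeringLeft Cᵒᵖ Dᵒᵖ (Type u)).obj F.op) Q.obj))

end CategoryTheory.Functor.IsCoverDense

namespace OrbitCat

variable {G : Type} [Group G]

def cosetBotEquiv : Quotient (QuotientGroup.rightRel (⊥ : Subgroup G)) ≃ G where
  toFun := Quotient.lift id fun _ _ h =>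
    (mul_inv_eq_one.mp (Subgroup.mem_bot.mp (QuotientGroup.rightRel_apply.mp h))).symm
  invFun := Quotient.mk _
  left_inv := Quotient.ind fun _ => rfl
  right_inv _ := rfl

def cosetGSetBotIsoYoneda : cosetGSet (⊥ : Subgroup G) ≅ yoneda.obj (SingleObj.star G) :=
  NatIso.ofComponents (fun _ => cosetBotEquiv.toIso) fun _ => by
    ext q
    induction q using Quotient.inductionOn'
    rfl

def orbitBotIotaCompIsoYoneda : orbitBotIota G ⋙ inducedFunctor cosetGSet ≅ yoneda :=
  NatIso.ofComponents (fun _ => cosetGSetBotIsoYoneda) fun _ => by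
    ext _ q
    induction q using Quotient.inductionOn'
    rfl

instance : (orbitBotIota G).Full :=
  have : (orbitBotIota G ⋙ inducedFunctor cosetGSet).Full :=
    Functor.Full.of_iso orbitBotIotaCompIsoYoneda.symm
  Functor.Full.of_comp_faithful _ (inducedFunctor cosetGSet)

instance : (orbitBotIota G).Faithful :=
  have : (orbitBotIota G ⋙ inducedFunctor cosetGSet).Faithful :=
    Functor.Faithful.of_iso orbitBotIotaCompIsoYoneda.symm
  Functor.Faithful.of_comp _ (inducedFunctor cosetGSet)

def orbitBotIotaHomEquiv (H : OrbitCat G) (x : SingleObj G) :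
    ((orbitBotIota G).obj x ⟶ H) ≃ (cosetGSet H).obj (op x) :=
  InducedCategory.homEquiv.trans
    (((orbitBotIotaCompIsoYoneda.app x).homCongr (Iso.refl _)).trans yonedaEquiv)

def restrictedYonedaIsoCosetGSet :
    yoneda ⋙ (Functor.whiskeringLeft _ _ Type).obj (orbitBotIota G).op ≅
      inducedFunctor cosetGSet :=
  NatIso.ofComponents
    (fun H => NatIso.ofComponents (fun x => (orbitBotIotaHomEquiv H x.unop).toIso) fun g => by
      ext f
      -- both sides are `f` at the coset of `g`, the right one by `G`-equivariance of `f`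
      change f.hom.app _ (Quotient.mk'' (g.unop * 1)) =
        (cosetGSet H).map g (f.hom.app _ (Quotient.mk'' 1))
      rw [mul_one, ← one_mul g.unop]
      exact NatTrans.naturality_apply f.hom g
        (Quotient.mk'' 1 : _root_.Quotient (QuotientGroup.rightRel ⊥)))
    fun _ => by
      ext
      rfl

variable {J : GrothendieckTopology (OrbitCat G)}

theorem isCoverDense_orbitBotIota (hJ : IsAtomicTopology J) :
    (orbitBotIota G).IsCoverDense J where
  is_cover H := (hJ _ _).2
    ⟨_, (orbitBotIotaHomEquiv H (SingleObj.star G)).symm (Quotient.mk'' 1),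
      Presieve.in_coverByImage _ _⟩

theorem isDenseSubsite_orbitBotIota (hJ : IsAtomicTopology J) :
    (orbitBotIota G).IsDenseSubsite ⊥ J :=
  have := isCoverDense_orbitBotIota hJ
  { functorPushforward_mem_iff := fun {x S} => by
      rw [hJ, GrothendieckTopology.bot_covering, ← Sieve.id_mem_iff_eq_top]
      constructor
      · rintro ⟨_, _, _, g, _, hg, _⟩
        have h := S.downward_closed hg (g⁻¹ : x ⟶ _)
        rwa [show (g⁻¹ : x ⟶ _) ≫ g = 𝟙 x from mul_inv_cancel g] at h
      · exact fun h => ⟨_, _, _, 𝟙 x, 𝟙 _, h, rfl⟩ }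

noncomputable def sheafIsoHomCosetGSet (hJ : IsAtomicTopology J) (Q : Sheaf J Type) :
    Q.obj ≅ (inducedFunctor cosetGSet).op ⋙ yoneda.obj ((orbitBotIota G).op ⋙ Q.obj) :=
  have := isCoverDense_orbitBotIota hJ
  Functor.IsCoverDense.sheafIsoHomRestrictedYoneda (orbitBotIota G) Q ≪≫
    Functor.isoWhiskerRight (NatIso.op restrictedYonedaIsoCosetGSet).symm _

end OrbitCat

theorem sheaves_on_orbit_category_equiv_gSet_general (G : Type) [Group G]
    (J : GrothendieckTopology (OrbitCat G)) (hJ : IsAtomicTopology J) :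
    ∃ E : GSet G ≌ Sheaf J Type,
      (∀ M : GSet G,
        Nonempty ((sheafToPresheaf J Type).obj (E.functor.obj M) ≅
          (inducedFunctor (cosetGSet (G := G))).op ⋙ yoneda.obj M)) ∧
      (∀ F : Sheaf J Type,
        Nonempty (E.inverse.obj F ≅ (orbitBotIota G).op ⋙ F.val)) := by
  have := OrbitCat.isDenseSubsite_orbitBotIota hJ
  let E : GSet G ≌ Sheaf J Type := (sheafBotEquivalence Type).symm.trans
    (Functor.IsDenseSubsite.sheafEquiv ⊥ J (orbitBotIota G) Type)
  refine ⟨E, fun M => ⟨?_⟩, fun F => ⟨Iso.refl _⟩⟩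
  exact OrbitCat.sheafIsoHomCosetGSet hJ (E.functor.obj M) ≪≫
    (yoneda ⋙ (Functor.whiskeringLeft _ _ Type).obj (inducedFunctor cosetGSet).op).mapIso
      (E.unitIso.app M).symm

/-- **Artin, Mac Lane–Moerdijk.** For a finite group `G`, the category of sheaves
of sets on the orbit category `O(G)` with the atomic topology is equivalent to the
category of right `G`-sets: the functor `M ↦ (H\G ↦ Hom_{G-Set}(H\G, M))` is an
equivalence onto the sheaf category, with quasi-inverse `F ↦ F(1\G)`. -/
theorem sheaves_on_orbit_category_equiv_gSet (G : Type) [Group G] [Finite G]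
    (J : GrothendieckTopology (OrbitCat G)) (hJ : IsAtomicTopology J) :
    ∃ E : GSet G ≌ Sheaf J Type,
      (∀ M : GSet G,
        Nonempty ((sheafToPresheaf J Type).obj (E.functor.obj M) ≅
          (inducedFunctor (cosetGSet (G := G))).op ⋙ yoneda.obj M)) ∧
      (∀ F : Sheaf J Type,
        Nonempty (E.inverse.obj F ≅ (orbitBotIota G).op ⋙ F.val)) :=
  sheaves_on_orbit_category_equiv_gSet_general G J hJ
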